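/- arXiv:2203.00571 — 2 statements merged into one kernel-verified Lean document; each statement's English description precedes it below -/
import Mathlib

section
/- For every α ∈ (0,1) and every T > 0 there exists a constant C = C(α,T) > 0 such that for all x ∈ (0,π) and all 0 ≤ s < t ≤ T: ∫₀ˢ ∫₀^π |G_{t-r}(x,z) - G_{s-r}(x,z)|² dz dr + ∫ₛᵗ ∫₀^π |G_{t-r}(x,z)|² dz dr ≤ C (t-s)^{3α/4}, and ∫₀ˢ ∫₀^π |ΔG_{t-r}(x,z) - ΔG_{s-r}(x,z)| dz dr + ∫ₛᵗ ∫₀^π |ΔG_{t-r}(x,z)| dz dr ≤ C (t-s)^{3α/8}. -/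
noncomputable section

open Real intervalIntegral

/-- The Dirichlet eigenfunctions `φ_j(x) = √(2/π) sin(jx)` on `(0,π)`. -/
def phiF (j : ℕ) (x : ℝ) : ℝ := Real.sqrt (2 / Real.pi) * Real.sin (j * x)

/-- The Green function of `∂_t + Δ²` with Dirichlet boundary conditions on `(0,π)`:
`G_t(x,y) = Σ_{j≥1} e^{-j⁴ t} φ_j(x) φ_j(y)`. -/
def GF (t x y : ℝ) : ℝ :=
  ∑' j : ℕ, Real.exp (-((j : ℝ) + 1) ^ 4 * t) * phiF (j + 1) x * phiF (j + 1) y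

/-- `ΔG_t(x,y) = -Σ_{j≥1} j² e^{-j⁴ t} φ_j(x) φ_j(y)`. -/
def DGF (t x y : ℝ) : ℝ :=
  -∑' j : ℕ, ((j : ℝ) + 1) ^ 2 * Real.exp (-((j : ℝ) + 1) ^ 4 * t) * phiF (j + 1) x * phiF (j + 1) y

/-- The grid projection `κ_n(y) = h⌊y/h⌋` with `h = π/n`. -/
def kap (n : ℕ) (y : ℝ) : ℝ := (Real.pi / n) * ⌊y / (Real.pi / n)⌋

/-- The eigenvalue `λ_{j,n} = -(4n²/π²) sin²(jπ/(2n))` of the discrete Dirichlet Laplacian. -/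
def lamEig (j n : ℕ) : ℝ :=
  -(4 * (n : ℝ) ^ 2 / Real.pi ^ 2) * Real.sin ((j : ℝ) * Real.pi / (2 * n)) ^ 2

/-- The piecewise-linear interpolant `φ_{j,n}` of `φ_j` on the grid `{0, h, …, π}`. -/
def phiIn (n j : ℕ) (x : ℝ) : ℝ :=
  phiF j (kap n x)
    + ((n : ℝ) / Real.pi) * (x - kap n x) * (phiF j (kap n x + Real.pi / n) - phiF j (kap n x))

/-- The spatially discrete Green function
`G^n_t(x,y) = Σ_{j=1}^{n-1} e^{-λ_{j,n}² t} φ_{j,n}(x) φ_j(κ_n(y))`. -/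
def Gn (n : ℕ) (t x y : ℝ) : ℝ :=
  ∑ j ∈ Finset.range (n - 1),
    Real.exp (-(lamEig (j + 1) n) ^ 2 * t) * phiIn n (j + 1) x * phiF (j + 1) (kap n y)

/-- `Δ_nG^n_t(x,y) = Σ_{j=1}^{n-1} λ_{j,n} e^{-λ_{j,n}² t} φ_{j,n}(x) φ_j(κ_n(y))`. -/
def DGn (n : ℕ) (t x y : ℝ) : ℝ :=
  ∑ j ∈ Finset.range (n - 1),
    lamEig (j + 1) n * Real.exp (-(lamEig (j + 1) n) ^ 2 * t)
      * phiIn n (j + 1) x * phiF (j + 1) (kap n y)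

/-- The fully discrete Green function
`G^{n,τ}_t(x,y) = Σ_{j=1}^{n-1} (1 + τλ_{j,n}²)^{-⌊t/τ⌋} φ_{j,n}(x) φ_j(κ_n(y))`. -/
def Gnt (n : ℕ) (τ t x y : ℝ) : ℝ :=
  ∑ j ∈ Finset.range (n - 1),
    ((1 + τ * (lamEig (j + 1) n) ^ 2) ^ (⌊t / τ⌋₊))⁻¹ * phiIn n (j + 1) x * phiF (j + 1) (kap n y)

/-- `Δ_nG^{n,τ}_t(x,y) = Σ_{j=1}^{n-1} λ_{j,n} (1 + τλ_{j,n}²)^{-⌊t/τ⌋} φ_{j,n}(x) φ_j(κ_n(y))`. -/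
def DGnt (n : ℕ) (τ t x y : ℝ) : ℝ :=
  ∑ j ∈ Finset.range (n - 1),
    lamEig (j + 1) n * ((1 + τ * (lamEig (j + 1) n) ^ 2) ^ (⌊t / τ⌋₊))⁻¹
      * phiIn n (j + 1) x * phiF (j + 1) (kap n y)


section Stmt13Proof

open MeasureTheory

lemma abs_sin_le_one' (x : ℝ) : |Real.sin x| ≤ 1 :=
  abs_le.mpr ⟨Real.neg_one_le_sin x, Real.sin_le_one x⟩

lemma integral_cos_nz {c : ℝ} (hc : c ≠ 0) :
    ∫ z in (0:ℝ)..Real.pi, Real.cos (c * z) = Real.sin (c * Real.pi) / c := by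
  rw [intervalIntegral.integral_comp_mul_left (fun x => Real.cos x) hc]
  simp [integral_cos, smul_eq_mul]
  ring

lemma orth (m k : ℕ) (hm : m ≠ 0) (hk : k ≠ 0) :
    ∫ z in (0:ℝ)..Real.pi, Real.sin (m * z) * Real.sin (k * z)
      = if m = k then Real.pi / 2 else 0 := by
  have key : ∀ z : ℝ, Real.sin (m * z) * Real.sin (k * z)
      = (Real.cos (((m:ℝ) - k) * z) - Real.cos (((m:ℝ) + k) * z)) / 2 := by
    intro z
    have h := Real.cos_sub_cos (((m:ℝ) - k) * z) (((m:ℝ) + k) * z)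
    have h1 : (((m:ℝ) - k) * z + ((m:ℝ) + k) * z)/2 = m * z := by ring
    have h2 : (((m:ℝ) - k) * z - ((m:ℝ) + k) * z)/2 = -(k * z) := by ring
    rw [h1, h2, Real.sin_neg] at h
    linarith
  simp only [key]
  rw [intervalIntegral.integral_div]
  by_cases h : m = k
  · subst h
    simp only [sub_self, zero_mul, Real.cos_zero]
    rw [intervalIntegral.integral_sub intervalIntegrable_const
      ((Continuous.intervalIntegrable (by fun_prop) _ _))]
    have hmk : ((m:ℝ) + m) ≠ 0 := by
      have : (0:ℝ) < (m:ℝ) + m := by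
        have : (0:ℝ) < (m:ℝ) := by exact_mod_cast Nat.pos_of_ne_zero hm
        linarith
      exact this.ne'
    rw [integral_cos_nz hmk]
    have : Real.sin (((m:ℝ) + m) * Real.pi) = 0 := by
      have := Real.sin_nat_mul_pi (m + m)
      push_cast at this
      convert this using 2
    rw [this]
    simp only [if_pos rfl, zero_div, sub_zero]
    rw [intervalIntegral.integral_const]
    simp
  · have hmk1 : ((m:ℝ) - k) ≠ 0 := by
      intro hc
      apply h
      have : (m:ℝ) = k := by linarith [sub_eq_zero.mp hc]
      exact_mod_cast this
    have hmk2 : ((m:ℝ) + k) ≠ 0 := by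
      have : (0:ℝ) < (m:ℝ) + k := by
        have h1 : (0:ℝ) < (m:ℝ) := by exact_mod_cast Nat.pos_of_ne_zero hm
        have h2 : (0:ℝ) ≤ (k:ℝ) := Nat.cast_nonneg k
        linarith
      exact this.ne'
    rw [intervalIntegral.integral_sub
      ((Continuous.intervalIntegrable (by fun_prop) _ _))
      ((Continuous.intervalIntegrable (by fun_prop) _ _))]
    rw [integral_cos_nz hmk1, integral_cos_nz hmk2]
    have e1 : Real.sin (((m:ℝ) - k) * Real.pi) = 0 := by
      have := Real.sin_int_mul_pi ((m:ℤ) - k)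
      push_cast at this
      convert this using 2
    have e2 : Real.sin (((m:ℝ) + k) * Real.pi) = 0 := by
      have := Real.sin_int_mul_pi ((m:ℤ) + k)
      push_cast at this
      convert this using 2
    rw [e1, e2, if_neg h]
    simp

set_option maxHeartbeats 1000000 in
lemma parseval (c : ℕ → ℝ) (hc : Summable fun j => |c j|) :
    ∫ z in (0:ℝ)..Real.pi, (∑' j : ℕ, c j * Real.sin (((j:ℝ)+1) * z))^2
      = (Real.pi/2) * ∑' j : ℕ, (c j)^2 := by
  have hnorm : ∀ z : ℝ, Summable fun j : ℕ => ‖c j * Real.sin (((j:ℝ)+1) * z)‖ := by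
    intro z
    apply Summable.of_nonneg_of_le (fun j => norm_nonneg _) _ hc
    intro j
    rw [Real.norm_eq_abs, abs_mul]
    exact mul_le_of_le_one_right (abs_nonneg _) (abs_sin_le_one' _)
  set f : ℕ × ℕ → ℝ → ℝ := fun p z =>
    (c p.1 * Real.sin (((p.1:ℝ)+1) * z)) * (c p.2 * Real.sin (((p.2:ℝ)+1) * z)) with hfdef
  have hsq : ∀ z : ℝ, (∑' j : ℕ, c j * Real.sin (((j:ℝ)+1) * z))^2 = ∑' p : ℕ × ℕ, f p z := by
    intro z
    rw [sq, tsum_mul_tsum_of_summable_norm (hnorm z) (hnorm z)]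
  have habs : ∀ (p : ℕ×ℕ) (z : ℝ), ‖f p z‖ ≤ |c p.1| * |c p.2| := by
    intro p z
    have h1 : |f p z| = |c p.1| * |Real.sin (((p.1:ℝ)+1)*z)|
        * (|c p.2| * |Real.sin (((p.2:ℝ)+1)*z)|) := by
      simp [hfdef, abs_mul]
    rw [Real.norm_eq_abs, h1]
    exact mul_le_mul (mul_le_of_le_one_right (abs_nonneg _) (abs_sin_le_one' _))
      (mul_le_of_le_one_right (abs_nonneg _) (abs_sin_le_one' _))
      (by positivity) (abs_nonneg _)
  have hcontf : ∀ p : ℕ×ℕ, Continuous (f p) := fun p => by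
    apply Continuous.mul <;> exact continuous_const.mul (by fun_prop)
  have hprodsum : Summable fun p : ℕ×ℕ => |c p.1| * |c p.2| :=
    hc.mul_of_nonneg hc (fun _ => abs_nonneg _) (fun _ => abs_nonneg _)
  have hfin : ∑' p : ℕ×ℕ, ∫⁻ z in Set.Ioc (0:ℝ) Real.pi, ‖f p z‖₊ ∂volume ≠ ⊤ := by
    have h1 : ∀ p : ℕ×ℕ, ∫⁻ z in Set.Ioc (0:ℝ) Real.pi, ‖f p z‖₊ ∂volume
        ≤ ENNReal.ofReal (|c p.1| * |c p.2|) * ENNReal.ofReal Real.pi := by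
      intro p
      have step : ∀ z : ℝ, (‖f p z‖₊ : ENNReal) ≤ ENNReal.ofReal (|c p.1| * |c p.2|) := fun z => by
        rw [← ENNReal.ofReal_coe_nnreal, coe_nnnorm]
        exact ENNReal.ofReal_le_ofReal (habs p z)
      refine (lintegral_mono step).trans ?_
      rw [MeasureTheory.lintegral_const, Measure.restrict_apply MeasurableSet.univ,
        Set.univ_inter, Real.volume_Ioc, sub_zero]
    have h2 : (∑' p : ℕ×ℕ, ENNReal.ofReal (|c p.1| * |c p.2|)) ≠ ⊤ := by
      rw [← ENNReal.ofReal_tsum_of_nonneg (fun p => by positivity) hprodsum]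
      exact ENNReal.ofReal_ne_top
    have h3 := ENNReal.tsum_le_tsum h1
    rw [ENNReal.tsum_mul_right] at h3
    exact ne_top_of_le_ne_top (ENNReal.mul_ne_top h2 ENNReal.ofReal_ne_top) h3
  rw [intervalIntegral.integral_of_le Real.pi_pos.le]
  simp_rw [hsq]
  rw [MeasureTheory.integral_tsum (fun p => (hcontf p).aestronglyMeasurable) hfin]
  have hval : ∀ p : ℕ×ℕ, ∫ z in Set.Ioc (0:ℝ) Real.pi, f p z ∂volume
      = if p.1 = p.2 then c p.1 * c p.2 * (Real.pi/2) else 0 := by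
    intro p
    rw [← intervalIntegral.integral_of_le Real.pi_pos.le]
    have hre : ∀ z : ℝ, f p z = (c p.1 * c p.2)
        * (Real.sin (((p.1:ℝ)+1)*z) * Real.sin (((p.2:ℝ)+1)*z)) := fun z => by
      simp only [hfdef]; ring
    simp_rw [hre]
    rw [intervalIntegral.integral_const_mul]
    have ho := orth (p.1+1) (p.2+1) (Nat.succ_ne_zero _) (Nat.succ_ne_zero _)
    push_cast at ho
    rw [ho]
    by_cases h : p.1 = p.2
    · simp [h]
    · have : ¬ (p.1 + 1 = p.2 + 1) := by omega
      simp [h, this]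
  have hites : Summable fun p : ℕ×ℕ => if p.1 = p.2 then c p.1 * c p.2 * (Real.pi/2) else 0 := by
    apply Summable.of_nonneg_of_le _ _ (hprodsum.mul_right (Real.pi/2))
    · intro p
      by_cases h : p.1 = p.2
      · rw [if_pos h, h]
        exact mul_nonneg (mul_self_nonneg _) (by positivity)
      · simp [h]
    · intro p
      by_cases h : p.1 = p.2
      · simp only [if_pos h]
        apply mul_le_mul_of_nonneg_right _ (by positivity : (0:ℝ) ≤ Real.pi/2)
        calc c p.1 * c p.2 ≤ |c p.1 * c p.2| := le_abs_self _
          _ = |c p.1| * |c p.2| := abs_mul _ _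
      · simp [h]; positivity
  calc ∑' p : ℕ×ℕ, ∫ z in Set.Ioc (0:ℝ) Real.pi, f p z ∂volume
      = ∑' p : ℕ×ℕ, (if p.1 = p.2 then c p.1 * c p.2 * (Real.pi/2) else 0) := tsum_congr hval
    _ = ∑' (i:ℕ), ∑' (j:ℕ), (if i = j then c i * c j * (Real.pi/2) else 0) :=
        Summable.tsum_prod' hites (fun i => summable_of_ne_finset_zero (s := {i})
          (fun j hj => by simp at hj; simp [Ne.symm hj]))
    _ = ∑' (i:ℕ), c i^2 * (Real.pi/2) := by
        apply tsum_congr; intro i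
        rw [tsum_eq_single i (fun j hj => by simp [Ne.symm hj])]
        simp [sq]
    _ = (Real.pi/2) * ∑' i:ℕ, (c i)^2 := by rw [tsum_mul_right, mul_comm]

lemma exp_le_rpow_aux {q x : ℝ} (hq : 0 < q) (hx : 0 < x) :
    Real.exp (-x) ≤ (Nat.ceil q).factorial * x ^ (-q) := by
  have hfac : (1:ℝ) ≤ (Nat.ceil q).factorial := by
    exact_mod_cast Nat.one_le_iff_ne_zero.mpr (Nat.factorial_ne_zero _)
  rcases le_or_gt 1 x with h1 | h1
  · have h2 : x ^ q ≤ x ^ ((Nat.ceil q : ℕ) : ℝ) :=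
      Real.rpow_le_rpow_of_exponent_le h1 (Nat.le_ceil q)
    have h3 : x ^ ((Nat.ceil q : ℕ) : ℝ) = x ^ (Nat.ceil q : ℕ) := Real.rpow_natCast x _
    have h4 : x ^ (Nat.ceil q : ℕ) ≤ (Nat.ceil q).factorial * Real.exp x := by
      have h5 := Real.pow_div_factorial_le_exp (x := x) (by linarith) (Nat.ceil q)
      rw [div_le_iff₀ (by positivity)] at h5
      linarith [h5]
    have key : x ^ q ≤ (Nat.ceil q).factorial * Real.exp x := by
      rw [← h3] at h4; linarith
    have hpos : 0 < x ^ q / (Nat.ceil q).factorial := by positivity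
    have hle : x ^ q / (Nat.ceil q).factorial ≤ Real.exp x := by
      rw [div_le_iff₀ (by positivity), mul_comm]; exact key
    have hinv : (Real.exp x)⁻¹ ≤ (x ^ q / (Nat.ceil q).factorial)⁻¹ := by
      gcongr
    rw [Real.exp_neg, Real.rpow_neg hx.le]
    calc (Real.exp x)⁻¹ ≤ (x ^ q / (Nat.ceil q).factorial)⁻¹ := hinv
      _ = (Nat.ceil q).factorial * (x ^ q)⁻¹ := by rw [inv_div]; ring
  · have e1 : Real.exp (-x) ≤ 1 := by
      rw [← Real.exp_zero]
      exact Real.exp_le_exp.mpr (by linarith)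
    have hp : 0 < x ^ q := Real.rpow_pos_of_pos hx q
    have hle1 : x ^ q ≤ 1 := Real.rpow_le_one hx.le h1.le hq.le
    have e2 : (1:ℝ) ≤ x ^ (-q) := by
      rw [Real.rpow_neg hx.le]
      nlinarith [mul_inv_cancel₀ hp.ne', inv_nonneg.mpr hp.le]
    have hxq : (0:ℝ) ≤ x ^ (-q) := Real.rpow_nonneg hx.le _
    nlinarith

lemma summable_pq {r : ℝ} (hr : r < -1) : Summable fun j : ℕ => ((j:ℝ)+1) ^ r := by
  have h := (Real.summable_nat_rpow (p := r)).2 hr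
  have h2 := (summable_nat_add_iff 1).2 h
  refine h2.congr fun j => ?_
  push_cast
  rfl

lemma tsum_pq_pos {r : ℝ} (hr : r < -1) : 0 < ∑' j : ℕ, ((j:ℝ)+1) ^ r := by
  apply Summable.tsum_pos (summable_pq hr) (fun j => Real.rpow_nonneg (by positivity) r) 0
  norm_num

/-- master constant -/
def Kc (p q : ℝ) : ℝ := (Nat.ceil q).factorial * 2 ^ (-q) * ∑' j : ℕ, ((j:ℝ)+1) ^ (p - 4*q)

lemma Kc_pos {p q : ℝ} (hq : 0 < q) (hpq : p - 4*q < -1) : 0 < Kc p q := by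
  unfold Kc
  have h1 : (0:ℝ) < (Nat.ceil q).factorial := by
    exact_mod_cast Nat.factorial_pos _
  have h2 : (0:ℝ) < (2:ℝ) ^ (-q) := Real.rpow_pos_of_pos (by norm_num) _
  exact mul_pos (mul_pos h1 h2) (tsum_pq_pos hpq)

lemma master_term {p q u : ℝ} (hp : 0 ≤ p) (hq : 0 < q) (hu : 0 < u) (j : ℕ) :
    ((j:ℝ)+1)^p * Real.exp (-(2*((j:ℝ)+1)^4*u))
      ≤ ((Nat.ceil q).factorial * 2^(-q) * ((j:ℝ)+1)^(p - 4*q)) * u^(-q) := by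
  have hj : (0:ℝ) < (j:ℝ)+1 := by positivity
  have hx : (0:ℝ) < 2*((j:ℝ)+1)^4*u := by positivity
  have h1 := exp_le_rpow_aux hq hx
  have h2 : (2*((j:ℝ)+1)^4*u) ^ (-q) = 2^(-q) * ((j:ℝ)+1)^(-(4*q)) * u^(-q) := by
    rw [Real.mul_rpow (by positivity) hu.le, Real.mul_rpow (by norm_num) (by positivity)]
    congr 1
    congr 1
    rw [← Real.rpow_natCast ((j:ℝ)+1) 4, ← Real.rpow_mul hj.le]
    norm_num
  have h3 : ((j:ℝ)+1)^p * ((j:ℝ)+1)^(-(4*q)) = ((j:ℝ)+1)^(p - 4*q) := by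
    rw [← Real.rpow_add hj]
    ring_nf
  calc ((j:ℝ)+1)^p * Real.exp (-(2*((j:ℝ)+1)^4*u))
      ≤ ((j:ℝ)+1)^p * ((Nat.ceil q).factorial * (2*((j:ℝ)+1)^4*u) ^ (-q)) := by
        apply mul_le_mul_of_nonneg_left h1 (Real.rpow_nonneg hj.le p)
    _ = ((Nat.ceil q).factorial * 2^(-q) * (((j:ℝ)+1)^p * ((j:ℝ)+1)^(-(4*q)))) * u^(-q) := by
        rw [h2]; ring
    _ = _ := by rw [h3]

lemma master_sum {p q u c0 : ℝ} (hp : 0 ≤ p) (hq : 0 < q) (hpq : p - 4*q < -1) (hu : 0 < u)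
    (hc0 : 0 ≤ c0) (f : ℕ → ℝ) (hf0 : ∀ j, 0 ≤ f j)
    (hfle : ∀ j, f j ≤ c0 * (((j:ℝ)+1)^p * Real.exp (-(2*((j:ℝ)+1)^4*u)))) :
    Summable f ∧ ∑' j, f j ≤ c0 * Kc p q * u^(-q) := by
  set g : ℕ → ℝ := fun j =>
    (c0 * ((Nat.ceil q).factorial * 2^(-q)) * ((j:ℝ)+1)^(p - 4*q)) * u^(-q) with hg
  have hle : ∀ j, f j ≤ g j := by
    intro j
    refine (hfle j).trans ?_
    have := master_term (u := u) hp hq hu j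
    calc c0 * (((j:ℝ)+1)^p * Real.exp (-(2*((j:ℝ)+1)^4*u)))
        ≤ c0 * (((Nat.ceil q).factorial * 2^(-q) * ((j:ℝ)+1)^(p - 4*q)) * u^(-q)) :=
          mul_le_mul_of_nonneg_left this hc0
      _ = g j := by rw [hg]; ring
  have hgsum : Summable g := (((summable_pq hpq).mul_left _).mul_right _)
  have hfsum : Summable f := Summable.of_nonneg_of_le hf0 hle hgsum
  refine ⟨hfsum, ?_⟩
  refine (Summable.tsum_le_tsum hle hfsum hgsum).trans ?_
  rw [hg]
  rw [tsum_mul_right, tsum_mul_left, Kc]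
  exact le_of_eq (by ring)

lemma exp_diff {a u d p : ℝ} (ha : 0 < a) (hd : 0 < d) (hp : 0 < p) (hp1 : p ≤ 1) :
    |Real.exp (-(a*(u+d))) - Real.exp (-(a*u))| ≤ Real.exp (-(a*u)) * (a*d)^p := by
  have hfactor : Real.exp (-(a*(u+d))) = Real.exp (-(a*u)) * Real.exp (-(a*d)) := by
    rw [← Real.exp_add]; ring_nf
  have hexp1 : Real.exp (-(a*d)) ≤ 1 := by
    rw [← Real.exp_zero]; exact Real.exp_le_exp.mpr (by nlinarith)
  have habs : |Real.exp (-(a*(u+d))) - Real.exp (-(a*u))|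
      = Real.exp (-(a*u)) * (1 - Real.exp (-(a*d))) := by
    rw [abs_sub_comm, hfactor, abs_of_nonneg]
    · ring
    · nlinarith [Real.exp_pos (-(a*u))]
  rw [habs]
  apply mul_le_mul_of_nonneg_left _ (Real.exp_pos _).le
  set x := a*d with hxd
  have hx : 0 < x := by positivity
  rcases le_or_gt 1 x with h | h
  · have h2 : (1:ℝ) ≤ x ^ p := by
      calc (1:ℝ) = 1 ^ p := (Real.one_rpow p).symm
        _ ≤ x ^ p := Real.rpow_le_rpow (by norm_num) h (le_of_lt hp)
    nlinarith [Real.exp_pos (-x)]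
  · have h2 : 1 - x ≤ Real.exp (-x) := by
      have := Real.add_one_le_exp (-x); linarith
    have h3 : x ^ (1:ℝ) ≤ x ^ p := Real.rpow_le_rpow_of_exponent_ge hx h.le hp1
    rw [Real.rpow_one] at h3
    linarith

lemma contF (c : ℕ → ℝ) (hc : Summable fun j => |c j|) :
    Continuous fun z => ∑' j : ℕ, c j * Real.sin (((j:ℝ)+1) * z) := by
  apply continuous_tsum (u := fun j => |c j|) (fun j => by fun_prop) hc
  intro j z
  rw [Real.norm_eq_abs, abs_mul]
  exact mul_le_of_le_one_right (abs_nonneg _) (abs_sin_le_one' _)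

lemma inner_abs_le (c : ℕ → ℝ) (hc : Summable fun j => |c j|) (B : ℝ) (hB : 0 < B)
    (hS : ∑' j : ℕ, (c j)^2 ≤ 2*B^2) :
    ∫ z in (0:ℝ)..Real.pi, |∑' j : ℕ, c j * Real.sin (((j:ℝ)+1) * z)| ≤ Real.pi * B := by
  set F := fun z => ∑' j : ℕ, c j * Real.sin (((j:ℝ)+1) * z) with hF
  have hcont : Continuous F := contF c hc
  have key : ∀ z, |F z| ≤ (F z^2 + B^2) / (2*B) := by
    intro z
    rw [le_div_iff₀ (by positivity)]
    nlinarith [sq_nonneg (|F z| - B), sq_abs (F z), abs_nonneg (F z)]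
  have hInt : IntervalIntegrable (fun z => (F z^2 + B^2)/(2*B)) volume 0 Real.pi :=
    Continuous.intervalIntegrable (by fun_prop) _ _
  have step : ∫ z in (0:ℝ)..Real.pi, |F z| ≤ ∫ z in (0:ℝ)..Real.pi, (F z^2 + B^2)/(2*B) := by
    apply intervalIntegral.integral_mono_on Real.pi_pos.le
      ((hcont.abs).intervalIntegrable _ _) hInt
    exact fun z _ => key z
  refine step.trans ?_
  have heq : ∫ z in (0:ℝ)..Real.pi, (F z^2 + B^2)/(2*B)
      = ((Real.pi/2) * (∑' j : ℕ, (c j)^2) + Real.pi * B^2) / (2*B) := by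
    rw [intervalIntegral.integral_div]
    congr 1
    rw [intervalIntegral.integral_add (Continuous.intervalIntegrable (by fun_prop) _ _)
      intervalIntegrable_const]
    rw [parseval c hc, intervalIntegral.integral_const]
    simp [smul_eq_mul]
  rw [heq]
  rw [div_le_iff₀ (by positivity)]
  nlinarith [hS, Real.pi_pos]

lemma intInt_rpow_sub {q s : ℝ} (hq : q < 1) (hq0 : 0 < q) :
    IntervalIntegrable (fun r => (s - r) ^ (-q)) volume 0 s := by
  have h := intervalIntegral.intervalIntegrable_rpow' (a := 0) (b := s) (r := -q) (by linarith)
  have h2 := h.comp_sub_left s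
  simpa using h2.symm
lemma int_rpow_sub {q s : ℝ} (hq : q < 1) (hq0 : 0 < q) (hs : 0 ≤ s) :
    ∫ r in (0:ℝ)..s, (s - r) ^ (-q) = s ^ (1-q) / (1-q) := by
  rw [intervalIntegral.integral_comp_sub_left (fun u => u ^ (-q)) s]
  simp only [sub_self, sub_zero]
  rw [integral_rpow (Or.inl (by linarith))]
  rw [Real.zero_rpow (by linarith : -q + 1 ≠ 0)]
  rw [show -q + 1 = 1 - q by ring]
  simp

lemma intInt_rpow_sub' {q a b : ℝ} (hq : q < 1) (hq0 : 0 < q) (hab : a ≤ b) :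
    IntervalIntegrable (fun r => (b - r) ^ (-q)) volume a b := by
  have h := intervalIntegral.intervalIntegrable_rpow' (a := 0) (b := b - a) (r := -q)
    (by linarith)
  have h2 := h.comp_sub_left b
  simp only [sub_zero, sub_sub_cancel] at h2
  exact h2.symm

lemma int_rpow_sub' {q a b : ℝ} (hq : q < 1) (hq0 : 0 < q) (hab : a ≤ b) :
    ∫ r in a..b, (b - r) ^ (-q) = (b - a) ^ (1-q) / (1-q) := by
  rw [intervalIntegral.integral_comp_sub_left (fun u => u ^ (-q)) b]
  simp only [sub_self]
  rw [integral_rpow (Or.inl (by linarith))]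
  rw [Real.zero_rpow (by linarith : -q + 1 ≠ 0)]
  rw [show -q + 1 = 1 - q by ring]
  simp

lemma outer_le {a b q c0 : ℝ} (hab : a ≤ b) (hq0 : 0 < q) (hq1 : q < 1) (hc0 : 0 ≤ c0)
    (f : ℝ → ℝ) (hf0 : ∀ r, 0 ≤ f r)
    (hfle : ∀ r ∈ Set.Ioo a b, f r ≤ c0 * (b - r) ^ (-q)) :
    ∫ r in a..b, f r ≤ c0 * ((b - a) ^ (1-q) / (1-q)) := by
  have hgInt : IntervalIntegrable (fun r => c0 * (b - r)^(-q)) volume a b :=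
    (intInt_rpow_sub' hq1 hq0 hab).const_mul c0
  have hgi : IntegrableOn (fun r => c0 * (b - r)^(-q)) (Set.Ioo a b) volume := by
    have := (intervalIntegrable_iff_integrableOn_Ioc_of_le hab).1 hgInt
    exact this.mono_set Set.Ioo_subset_Ioc_self
  have step : ∫ r in a..b, f r ≤ ∫ r in Set.Ioo a b, c0 * (b - r)^(-q) ∂volume := by
    rw [intervalIntegral.integral_of_le hab, MeasureTheory.integral_Ioc_eq_integral_Ioo]
    exact MeasureTheory.integral_mono_of_nonneg (Filter.Eventually.of_forall hf0) hgi
      ((ae_restrict_iff' measurableSet_Ioo).2 (Filter.Eventually.of_forall hfle))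
  refine step.trans ?_
  rw [← MeasureTheory.integral_Ioc_eq_integral_Ioo, ← intervalIntegral.integral_of_le hab]
  rw [intervalIntegral.integral_const_mul, int_rpow_sub' hq1 hq0 hab]

def gcoef (u x : ℝ) (j : ℕ) : ℝ :=
  Real.exp (-((j:ℝ)+1)^4 * u) * (2/Real.pi) * Real.sin (((j:ℝ)+1) * x)
def dcoef (u x : ℝ) (j : ℕ) : ℝ :=
  ((j:ℝ)+1)^2 * Real.exp (-((j:ℝ)+1)^4 * u) * (2/Real.pi) * Real.sin (((j:ℝ)+1) * x)

lemma GF_repr (u x z : ℝ) : GF u x z = ∑' j : ℕ, gcoef u x j * Real.sin (((j:ℝ)+1) * z) := by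
  unfold GF gcoef phiF
  apply tsum_congr; intro j
  have h : Real.sqrt (2/Real.pi) * Real.sqrt (2/Real.pi) = 2/Real.pi :=
    Real.mul_self_sqrt (by positivity)
  push_cast
  linear_combination (Real.exp (-((j:ℝ) + 1) ^ 4 * u) * Real.sin (((j:ℝ)+1)*x)
    * Real.sin (((j:ℝ)+1)*z)) * h

lemma DGF_repr (u x z : ℝ) : DGF u x z = -∑' j : ℕ, dcoef u x j * Real.sin (((j:ℝ)+1) * z) := by
  unfold DGF dcoef phiF
  congr 1
  apply tsum_congr; intro j
  have h : Real.sqrt (2/Real.pi) * Real.sqrt (2/Real.pi) = 2/Real.pi :=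
    Real.mul_self_sqrt (by positivity)
  push_cast
  linear_combination (((j:ℝ)+1)^2 * Real.exp (-((j:ℝ) + 1) ^ 4 * u) * Real.sin (((j:ℝ)+1)*x)
    * Real.sin (((j:ℝ)+1)*z)) * h

lemma two_div_pi_le_one : (2:ℝ)/Real.pi ≤ 1 := by
  rw [div_le_one Real.pi_pos]
  linarith [Real.pi_gt_three]

lemma exp_arg_eq (u : ℝ) (j : ℕ) :
    Real.exp (-((j:ℝ)+1)^4 * u) = Real.exp (-((((j:ℝ)+1)^4) * u)) := by
  congr 1; ring

lemma abs_gcoef_le (u x : ℝ) (j : ℕ) :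
    |gcoef u x j| ≤ ((j:ℝ)+1)^((0:ℝ)) * Real.exp (-(2*((j:ℝ)+1)^4*(u/2))) := by
  have he : Real.exp (-(2*((j:ℝ)+1)^4*(u/2))) = Real.exp (-((j:ℝ)+1)^4 * u) := by
    congr 1; ring
  rw [he, Real.rpow_zero, one_mul]
  unfold gcoef
  rw [abs_mul, abs_mul, abs_of_nonneg (Real.exp_pos _).le,
    abs_of_nonneg (by positivity : (0:ℝ) ≤ 2/Real.pi)]
  calc Real.exp (-((j:ℝ)+1)^4 * u) * (2/Real.pi) * |Real.sin (((j:ℝ)+1)*x)|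
      ≤ Real.exp (-((j:ℝ)+1)^4 * u) * 1 * 1 := by
        apply mul_le_mul
        · exact mul_le_mul_of_nonneg_left two_div_pi_le_one (Real.exp_pos _).le
        · exact abs_sin_le_one' _
        · exact abs_nonneg _
        · positivity
    _ = Real.exp (-((j:ℝ)+1)^4 * u) := by ring

lemma abs_dcoef_le (u x : ℝ) (j : ℕ) :
    |dcoef u x j| ≤ ((j:ℝ)+1)^((2:ℝ)) * Real.exp (-(2*((j:ℝ)+1)^4*(u/2))) := by
  have he : Real.exp (-(2*((j:ℝ)+1)^4*(u/2))) = Real.exp (-((j:ℝ)+1)^4 * u) := by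
    congr 1; ring
  have h2 : ((j:ℝ)+1)^((2:ℝ)) = ((j:ℝ)+1)^(2:ℕ) := Real.rpow_natCast _ 2
  rw [he, h2]
  unfold dcoef
  rw [abs_mul, abs_mul, abs_mul, abs_of_nonneg (Real.exp_pos _).le,
    abs_of_nonneg (by positivity : (0:ℝ) ≤ 2/Real.pi),
    abs_of_nonneg (by positivity : (0:ℝ) ≤ ((j:ℝ)+1)^(2:ℕ))]
  calc ((j:ℝ)+1)^(2:ℕ) * Real.exp (-((j:ℝ)+1)^4 * u) * (2/Real.pi) * |Real.sin (((j:ℝ)+1)*x)|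
      ≤ ((j:ℝ)+1)^(2:ℕ) * Real.exp (-((j:ℝ)+1)^4 * u) * 1 * 1 := by
        apply mul_le_mul
        · exact mul_le_mul_of_nonneg_left two_div_pi_le_one (by positivity)
        · exact abs_sin_le_one' _
        · exact abs_nonneg _
        · positivity
    _ = ((j:ℝ)+1)^(2:ℕ) * Real.exp (-((j:ℝ)+1)^4 * u) := by ring

lemma summable_gc_abs {u : ℝ} (x : ℝ) (hu : 0 < u) :
    Summable fun j => |gcoef u x j| :=
  (master_sum (le_refl 0) one_half_pos (by norm_num) (half_pos hu) zero_le_one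
    (fun j => |gcoef u x j|) (fun j => abs_nonneg _)
    (fun j => by simpa using abs_gcoef_le u x j)).1

lemma summable_dc_abs {u : ℝ} (x : ℝ) (hu : 0 < u) :
    Summable fun j => |dcoef u x j| :=
  (master_sum (by norm_num : (0:ℝ) ≤ 2) one_pos (by norm_num) (half_pos hu) zero_le_one
    (fun j => |dcoef u x j|) (fun j => abs_nonneg _)
    (fun j => by simpa using abs_dcoef_le u x j)).1

lemma summable_gc_sin {u : ℝ} (x z : ℝ) (hu : 0 < u) :
    Summable fun j => gcoef u x j * Real.sin (((j:ℝ)+1) * z) := by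
  apply Summable.of_abs
  apply Summable.of_nonneg_of_le (fun j => abs_nonneg _) _ (summable_gc_abs x hu)
  intro j
  rw [abs_mul]
  exact mul_le_of_le_one_right (abs_nonneg _) (abs_sin_le_one' _)

lemma summable_dc_sin {u : ℝ} (x z : ℝ) (hu : 0 < u) :
    Summable fun j => dcoef u x j * Real.sin (((j:ℝ)+1) * z) := by
  apply Summable.of_abs
  apply Summable.of_nonneg_of_le (fun j => abs_nonneg _) _ (summable_dc_abs x hu)
  intro j
  rw [abs_mul]
  exact mul_le_of_le_one_right (abs_nonneg _) (abs_sin_le_one' _)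

lemma A_coef {x u d α : ℝ} (hu : 0 < u) (hd : 0 < d) (hα : 0 < α) (hα1 : α < 1) (j : ℕ) :
    (gcoef (u+d) x j - gcoef u x j)^2
      ≤ (4/Real.pi^2 * d^(3*α/4)) * (((j:ℝ)+1)^(3*α) * Real.exp (-(2*((j:ℝ)+1)^4*u))) := by
  set a : ℝ := ((j:ℝ)+1)^4 with ha
  have hapos : 0 < a := by positivity
  have hdiff := exp_diff (u := u) hapos hd (by linarith : (0:ℝ) < 3*α/8) (by linarith : 3*α/8 ≤ 1)
  have hre : gcoef (u+d) x j - gcoef u x j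
      = (Real.exp (-(a*(u+d))) - Real.exp (-(a*u))) * ((2/Real.pi) * Real.sin (((j:ℝ)+1)*x)) := by
    unfold gcoef
    rw [exp_arg_eq (u+d) j, exp_arg_eq u j, ← ha]
    ring
  have habs : |gcoef (u+d) x j - gcoef u x j|
      ≤ Real.exp (-(a*u)) * (a*d)^(3*α/8) * (2/Real.pi) := by
    rw [hre, abs_mul]
    calc |Real.exp (-(a*(u+d))) - Real.exp (-(a*u))| * |(2/Real.pi) * Real.sin (((j:ℝ)+1)*x)|
        ≤ (Real.exp (-(a*u)) * (a*d)^(3*α/8)) * (2/Real.pi) := by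
          apply mul_le_mul hdiff
          · rw [abs_mul, abs_of_nonneg (by positivity : (0:ℝ) ≤ 2/Real.pi)]
            exact mul_le_of_le_one_right (by positivity) (abs_sin_le_one' _)
          · exact abs_nonneg _
          · positivity
      _ = _ := by ring
  have hsq : (gcoef (u+d) x j - gcoef u x j)^2
      ≤ (Real.exp (-(a*u)) * (a*d)^(3*α/8) * (2/Real.pi))^2 := by
    rw [← sq_abs]
    apply pow_le_pow_left₀ (abs_nonneg _) habs
  refine hsq.trans (le_of_eq ?_)
  have e2 : (Real.exp (-(a*u)))^2 = Real.exp (-(2*a*u)) := by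
    rw [sq, ← Real.exp_add]; congr 1; ring
  have e3 : ((a*d)^(3*α/8))^2 = ((j:ℝ)+1)^(3*α) * d^(3*α/4) := by
    rw [sq, ← Real.rpow_add (by positivity : (0:ℝ) < a*d),
      show 3*α/8 + 3*α/8 = 3*α/4 by ring,
      Real.mul_rpow hapos.le hd.le, ha,
      ← Real.rpow_natCast ((j:ℝ)+1) 4, ← Real.rpow_mul (by positivity)]
    push_cast
    rw [show (4:ℝ)*(3*α/4) = 3*α by ring]
  rw [mul_pow, mul_pow, e2, e3]
  rw [ha]
  ring

lemma C_coef {x u d α : ℝ} (hu : 0 < u) (hd : 0 < d) (hα : 0 < α) (hα1 : α < 1) (j : ℕ) :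
    (dcoef u x j - dcoef (u+d) x j)^2
      ≤ (4/Real.pi^2 * d^(3*α/4)) * (((j:ℝ)+1)^(4+3*α) * Real.exp (-(2*((j:ℝ)+1)^4*u))) := by
  set a : ℝ := ((j:ℝ)+1)^4 with ha
  have hapos : 0 < a := by positivity
  have hdiff := exp_diff (u := u) hapos hd (by linarith : (0:ℝ) < 3*α/8) (by linarith : 3*α/8 ≤ 1)
  have hre : dcoef u x j - dcoef (u+d) x j
      = (Real.exp (-(a*u)) - Real.exp (-(a*(u+d))))
        * (((j:ℝ)+1)^2 * (2/Real.pi) * Real.sin (((j:ℝ)+1)*x)) := by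
    unfold dcoef
    rw [exp_arg_eq (u+d) j, exp_arg_eq u j, ← ha]
    ring
  have habs : |dcoef u x j - dcoef (u+d) x j|
      ≤ Real.exp (-(a*u)) * (a*d)^(3*α/8) * (((j:ℝ)+1)^2 * (2/Real.pi)) := by
    rw [hre, abs_mul]
    rw [abs_sub_comm] at hdiff
    calc |Real.exp (-(a*u)) - Real.exp (-(a*(u+d)))|
          * |((j:ℝ)+1)^2 * (2/Real.pi) * Real.sin (((j:ℝ)+1)*x)|
        ≤ (Real.exp (-(a*u)) * (a*d)^(3*α/8)) * (((j:ℝ)+1)^2 * (2/Real.pi)) := by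
          apply mul_le_mul hdiff
          · rw [abs_mul, abs_of_nonneg (by positivity : (0:ℝ) ≤ ((j:ℝ)+1)^2 * (2/Real.pi))]
            exact mul_le_of_le_one_right (by positivity) (abs_sin_le_one' _)
          · exact abs_nonneg _
          · positivity
      _ = _ := by ring
  have hsq : (dcoef u x j - dcoef (u+d) x j)^2
      ≤ (Real.exp (-(a*u)) * (a*d)^(3*α/8) * (((j:ℝ)+1)^2 * (2/Real.pi)))^2 := by
    rw [← sq_abs]
    apply pow_le_pow_left₀ (abs_nonneg _) habs
  refine hsq.trans (le_of_eq ?_)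
  have e2 : (Real.exp (-(a*u)))^2 = Real.exp (-(2*a*u)) := by
    rw [sq, ← Real.exp_add]; congr 1; ring
  have e3 : ((a*d)^(3*α/8))^2 = ((j:ℝ)+1)^(3*α) * d^(3*α/4) := by
    rw [sq, ← Real.rpow_add (by positivity : (0:ℝ) < a*d),
      show 3*α/8 + 3*α/8 = 3*α/4 by ring,
      Real.mul_rpow hapos.le hd.le, ha,
      ← Real.rpow_natCast ((j:ℝ)+1) 4, ← Real.rpow_mul (by positivity)]
    push_cast
    rw [show (4:ℝ)*(3*α/4) = 3*α by ring]
  have e4 : ((j:ℝ)+1)^(4+3*α) = ((j:ℝ)+1)^(4:ℕ) * ((j:ℝ)+1)^(3*α) := by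
    rw [← Real.rpow_natCast ((j:ℝ)+1) 4, ← Real.rpow_add (by positivity)]
    push_cast
    ring_nf
  rw [mul_pow, mul_pow, e2, e3, e4, ha]
  ring

lemma B_coef {x u : ℝ} (j : ℕ) :
    (gcoef u x j)^2
      ≤ 1 * (((j:ℝ)+1)^((0:ℝ)) * Real.exp (-(2*((j:ℝ)+1)^4*u))) := by
  have h := abs_gcoef_le (u := u) (x := x) j
  have h2 : (gcoef u x j)^2 ≤ (((j:ℝ)+1)^((0:ℝ)) * Real.exp (-(2*((j:ℝ)+1)^4*(u/2))))^2 := by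
    rw [← sq_abs]
    apply pow_le_pow_left₀ (abs_nonneg _) h
  refine h2.trans (le_of_eq ?_)
  have e2 : (Real.exp (-(2*((j:ℝ)+1)^4*(u/2))))^2 = Real.exp (-(2*((j:ℝ)+1)^4*u)) := by
    rw [sq, ← Real.exp_add]; congr 1; ring
  rw [mul_pow, e2, Real.rpow_zero]
  ring

lemma D_coef {x u : ℝ} (j : ℕ) :
    (dcoef u x j)^2
      ≤ 1 * (((j:ℝ)+1)^((4:ℝ)) * Real.exp (-(2*((j:ℝ)+1)^4*u))) := by
  have h := abs_dcoef_le (u := u) (x := x) j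
  have h2 : (dcoef u x j)^2 ≤ (((j:ℝ)+1)^((2:ℝ)) * Real.exp (-(2*((j:ℝ)+1)^4*(u/2))))^2 := by
    rw [← sq_abs]
    apply pow_le_pow_left₀ (abs_nonneg _) h
  refine h2.trans (le_of_eq ?_)
  have e1 : (((j:ℝ)+1)^((2:ℝ)))^2 = ((j:ℝ)+1)^((4:ℝ)) := by
    rw [sq, ← Real.rpow_add (by positivity)]
    norm_num
  have e2 : (Real.exp (-(2*((j:ℝ)+1)^4*(u/2))))^2 = Real.exp (-(2*((j:ℝ)+1)^4*u)) := by
    rw [sq, ← Real.exp_add]; congr 1; ring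
  rw [mul_pow, e1, e2]
  ring


lemma innerA {x α u d : ℝ} (hu : 0 < u) (hd : 0 < d) (hα : 0 < α) (hα1 : α < 1) :
    ∫ z in (0:ℝ)..Real.pi, (GF (u+d) x z - GF u x z)^2
      ≤ (Real.pi/2) * ((4/Real.pi^2*d^(3*α/4)) * Kc (3*α) ((3*α+5)/8) * u^(-((3*α+5)/8))) := by
  set c : ℕ → ℝ := fun j => gcoef (u+d) x j - gcoef u x j with hcdef
  have hc : Summable fun j => |c j| := by
    apply Summable.of_nonneg_of_le (fun j => abs_nonneg _) _
      ((summable_gc_abs (u := u+d) x (by linarith)).add (summable_gc_abs x hu))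
    intro j
    exact abs_sub _ _
  have hrepr : ∀ z, GF (u+d) x z - GF u x z = ∑' j : ℕ, c j * Real.sin (((j:ℝ)+1) * z) := by
    intro z
    rw [GF_repr, GF_repr,
      ← Summable.tsum_sub (summable_gc_sin x z (by linarith : (0:ℝ) < u+d))
        (summable_gc_sin x z hu)]
    apply tsum_congr; intro j
    rw [hcdef]; ring
  simp_rw [hrepr]
  rw [parseval c hc]
  apply mul_le_mul_of_nonneg_left _ (by positivity : (0:ℝ) ≤ Real.pi/2)
  exact (master_sum (by positivity : (0:ℝ) ≤ 3*α) (by linarith : (0:ℝ) < (3*α+5)/8)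
    (by linarith : 3*α - 4*((3*α+5)/8) < -1) hu (by positivity)
    (fun j => (c j)^2) (fun j => sq_nonneg _) (fun j => A_coef hu hd hα hα1 j)).2

lemma innerB {x α u : ℝ} (hu : 0 < u) (hα : 0 < α) (hα1 : α < 1) :
    ∫ z in (0:ℝ)..Real.pi, (GF u x z)^2
      ≤ (Real.pi/2) * (1 * Kc 0 (1-3*α/4) * u^(-(1-3*α/4))) := by
  set c : ℕ → ℝ := fun j => gcoef u x j with hcdef
  have hc : Summable fun j => |c j| := summable_gc_abs x hu
  have hrepr : ∀ z, GF u x z = ∑' j : ℕ, c j * Real.sin (((j:ℝ)+1) * z) := fun z => GF_repr u x z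
  simp_rw [hrepr]
  rw [parseval c hc]
  apply mul_le_mul_of_nonneg_left _ (by positivity : (0:ℝ) ≤ Real.pi/2)
  exact (master_sum (le_refl (0:ℝ)) (by linarith : (0:ℝ) < 1-3*α/4)
    (by linarith : 0 - 4*(1-3*α/4) < -1) hu (by norm_num)
    (fun j => (c j)^2) (fun j => sq_nonneg _) (fun j => B_coef j)).2

lemma innerC {x α u d : ℝ} (hu : 0 < u) (hd : 0 < d) (hα : 0 < α) (hα1 : α < 1) :
    ∫ z in (0:ℝ)..Real.pi, |DGF (u+d) x z - DGF u x z|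
      ≤ Real.pi * (Real.sqrt ((2/Real.pi^2) * Kc (4+3*α) ((13+3*α)/8))
          * d^(3*α/8) * u^(-(((13+3*α)/8)/2))) := by
  set qC : ℝ := (13+3*α)/8 with hqC
  set c : ℕ → ℝ := fun j => dcoef u x j - dcoef (u+d) x j with hcdef
  have hc : Summable fun j => |c j| := by
    apply Summable.of_nonneg_of_le (fun j => abs_nonneg _) _
      ((summable_dc_abs x hu).add (summable_dc_abs (u := u+d) x (by linarith)))
    intro j
    exact abs_sub _ _
  have hrepr : ∀ z, DGF (u+d) x z - DGF u x z = ∑' j : ℕ, c j * Real.sin (((j:ℝ)+1) * z) := by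
    intro z
    rw [DGF_repr, DGF_repr, neg_sub_neg,
      ← Summable.tsum_sub (summable_dc_sin x z hu)
        (summable_dc_sin x z (by linarith : (0:ℝ) < u+d))]
    apply tsum_congr; intro j
    rw [hcdef]; ring
  have hK : 0 < Kc (4+3*α) qC := Kc_pos (by linarith) (by rw [hqC]; linarith)
  set B : ℝ := Real.sqrt ((2/Real.pi^2) * Kc (4+3*α) qC) * d^(3*α/8) * u^(-(qC/2)) with hBdef
  have hB : 0 < B := by
    rw [hBdef]
    apply mul_pos (mul_pos (Real.sqrt_pos.mpr (by positivity)) (Real.rpow_pos_of_pos hd _))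
      (Real.rpow_pos_of_pos hu _)
  have hBsq : 2*B^2 = (4/Real.pi^2*d^(3*α/4)) * Kc (4+3*α) qC * u^(-qC) := by
    rw [hBdef]
    rw [mul_pow, mul_pow, Real.sq_sqrt (by positivity)]
    have e1 : (d^(3*α/8))^2 = d^(3*α/4) := by
      rw [sq, ← Real.rpow_add hd]; congr 1; ring
    have e2 : (u^(-(qC/2)))^2 = u^(-qC) := by
      rw [sq, ← Real.rpow_add hu]; congr 1; ring
    rw [e1, e2]
    ring
  have hS : ∑' j : ℕ, (c j)^2 ≤ 2*B^2 := by
    rw [hBsq]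
    exact (master_sum (by positivity : (0:ℝ) ≤ 4+3*α) (by rw [hqC]; linarith)
      (by rw [hqC]; linarith) hu (by positivity)
      (fun j => (c j)^2) (fun j => sq_nonneg _) (fun j => C_coef hu hd hα hα1 j)).2
  have := inner_abs_le c hc B hB hS
  simp_rw [hrepr]
  exact this

lemma innerD {x α u : ℝ} (hu : 0 < u) (hα : 0 < α) (hα1 : α < 1) :
    ∫ z in (0:ℝ)..Real.pi, |DGF u x z|
      ≤ Real.pi * (Real.sqrt (((1:ℝ)/2) * Kc 4 (2-3*α/4)) * u^(-((2-3*α/4)/2))) := by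
  set qD : ℝ := 2-3*α/4 with hqD
  set c : ℕ → ℝ := fun j => dcoef u x j with hcdef
  have hc : Summable fun j => |c j| := summable_dc_abs x hu
  have hrepr : ∀ z, |DGF u x z| = |∑' j : ℕ, c j * Real.sin (((j:ℝ)+1) * z)| := by
    intro z
    rw [DGF_repr, abs_neg]
  have hK : 0 < Kc 4 qD := Kc_pos (by rw [hqD]; linarith) (by rw [hqD]; linarith)
  set B : ℝ := Real.sqrt (((1:ℝ)/2) * Kc 4 qD) * u^(-(qD/2)) with hBdef
  have hB : 0 < B := by
    rw [hBdef]
    exact mul_pos (Real.sqrt_pos.mpr (by positivity)) (Real.rpow_pos_of_pos hu _)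
  have hBsq : 2*B^2 = 1 * Kc 4 qD * u^(-qD) := by
    rw [hBdef, mul_pow, Real.sq_sqrt (by positivity)]
    have e2 : (u^(-(qD/2)))^2 = u^(-qD) := by
      rw [sq, ← Real.rpow_add hu]; congr 1; ring
    rw [e2]
    ring
  have hS : ∑' j : ℕ, (c j)^2 ≤ 2*B^2 := by
    rw [hBsq]
    exact (master_sum (by norm_num : (0:ℝ) ≤ 4) (by rw [hqD]; linarith)
      (by rw [hqD]; linarith) hu (by norm_num)
      (fun j => (c j)^2) (fun j => sq_nonneg _) (fun j => D_coef j)).2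
  have := inner_abs_le c hc B hB hS
  simp_rw [hrepr]
  exact this


lemma termA {α T : ℝ} (hα : 0 < α) (hα1 : α < 1) (hT : 0 < T) :
    ∃ C : ℝ, 0 ≤ C ∧ ∀ x s t : ℝ, 0 ≤ s → s < t → t ≤ T →
      ∫ r in (0:ℝ)..s, ∫ z in (0:ℝ)..Real.pi, (GF (t-r) x z - GF (s-r) x z)^2
        ≤ C * (t-s)^(3*α/4) := by
  set q : ℝ := (3*α+5)/8 with hq
  have hq0 : 0 < q := by rw [hq]; linarith
  have hq1 : q < 1 := by rw [hq]; linarith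
  have hKpos : 0 < Kc (3*α) q := Kc_pos hq0 (by rw [hq]; linarith)
  have h1q : 0 < 1 - q := by linarith
  refine ⟨(Real.pi/2) * (4/Real.pi^2) * Kc (3*α) q * (T^(1-q)/(1-q)), by positivity, ?_⟩
  intro x s t hs hst htT
  have hd : 0 < t - s := by linarith
  set c0 : ℝ := (Real.pi/2) * (4/Real.pi^2*(t-s)^(3*α/4)) * Kc (3*α) q with hc0
  have hc0n : 0 ≤ c0 := by rw [hc0]; positivity
  have h := outer_le (a := 0) (b := s) hs hq0 hq1 hc0n
    (fun r => ∫ z in (0:ℝ)..Real.pi, (GF (t-r) x z - GF (s-r) x z)^2)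
    (fun r => intervalIntegral.integral_nonneg Real.pi_pos.le (fun z _ => sq_nonneg _))
    ?_
  · refine h.trans ?_
    rw [sub_zero]
    have hsT : s ^ (1-q) ≤ T ^ (1-q) := Real.rpow_le_rpow hs (by linarith) (by linarith)
    calc c0 * (s^(1-q)/(1-q)) ≤ c0 * (T^(1-q)/(1-q)) := by gcongr
      _ = _ := by rw [hc0]; ring
  · intro r hr
    have hu : 0 < s - r := by linarith [hr.2]
    have htr : t - r = (s - r) + (t - s) := by ring
    show (∫ z in (0:ℝ)..Real.pi, (GF (t-r) x z - GF (s-r) x z)^2) ≤ c0 * (s-r)^(-q)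
    rw [htr]
    calc (∫ z in (0:ℝ)..Real.pi, (GF ((s-r)+(t-s)) x z - GF (s-r) x z)^2)
        ≤ (Real.pi/2) * ((4/Real.pi^2*(t-s)^(3*α/4)) * Kc (3*α) q * (s-r)^(-q)) :=
          innerA hu hd hα hα1
      _ = c0 * (s-r)^(-q) := by rw [hc0]; ring

lemma termB {α T : ℝ} (hα : 0 < α) (hα1 : α < 1) (hT : 0 < T) :
    ∃ C : ℝ, 0 ≤ C ∧ ∀ x s t : ℝ, 0 ≤ s → s < t → t ≤ T →
      ∫ r in s..t, ∫ z in (0:ℝ)..Real.pi, (GF (t-r) x z)^2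
        ≤ C * (t-s)^(3*α/4) := by
  set q : ℝ := 1-3*α/4 with hq
  have hq0 : 0 < q := by rw [hq]; linarith
  have hq1 : q < 1 := by rw [hq]; linarith
  have h1q : 0 < 1 - q := by linarith
  have hKpos : 0 < Kc 0 q := Kc_pos hq0 (by rw [hq]; linarith)
  refine ⟨(Real.pi/2) * Kc 0 q * (1/(1-q)), by positivity, ?_⟩
  intro x s t hs hst htT
  have hd : 0 < t - s := by linarith
  set c0 : ℝ := (Real.pi/2) * (1 * Kc 0 q) with hc0
  have hc0n : 0 ≤ c0 := by rw [hc0]; positivity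
  have h := outer_le (a := s) (b := t) hst.le hq0 hq1 hc0n
    (fun r => ∫ z in (0:ℝ)..Real.pi, (GF (t-r) x z)^2)
    (fun r => intervalIntegral.integral_nonneg Real.pi_pos.le (fun z _ => sq_nonneg _))
    ?_
  · refine h.trans (le_of_eq ?_)
    rw [hc0, show 1 - q = 3*α/4 by rw [hq]; ring]
    ring
  · intro r hr
    have hu : 0 < t - r := by linarith [hr.2]
    show (∫ z in (0:ℝ)..Real.pi, (GF (t-r) x z)^2) ≤ c0 * (t-r)^(-q)
    calc (∫ z in (0:ℝ)..Real.pi, (GF (t-r) x z)^2)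
        ≤ (Real.pi/2) * (1 * Kc 0 q * (t-r)^(-q)) := innerB hu hα hα1
      _ = c0 * (t-r)^(-q) := by rw [hc0]; ring

lemma termC {α T : ℝ} (hα : 0 < α) (hα1 : α < 1) (hT : 0 < T) :
    ∃ C : ℝ, 0 ≤ C ∧ ∀ x s t : ℝ, 0 ≤ s → s < t → t ≤ T →
      ∫ r in (0:ℝ)..s, ∫ z in (0:ℝ)..Real.pi, |DGF (t-r) x z - DGF (s-r) x z|
        ≤ C * (t-s)^(3*α/8) := by
  set qc : ℝ := (13+3*α)/8 with hqc
  set q : ℝ := qc/2 with hq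
  have hq0 : 0 < q := by rw [hq, hqc]; linarith
  have hq1 : q < 1 := by rw [hq, hqc]; linarith
  have h1q : 0 < 1 - q := by linarith
  have hKpos : 0 < Kc (4+3*α) qc := Kc_pos (by rw [hqc]; linarith) (by rw [hqc]; linarith)
  refine ⟨Real.pi * Real.sqrt ((2/Real.pi^2) * Kc (4+3*α) qc) * (T^(1-q)/(1-q)),
    by positivity, ?_⟩
  intro x s t hs hst htT
  have hd : 0 < t - s := by linarith
  set c0 : ℝ := Real.pi * (Real.sqrt ((2/Real.pi^2) * Kc (4+3*α) qc) * (t-s)^(3*α/8)) with hc0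
  have hc0n : 0 ≤ c0 := by
    rw [hc0]
    have := Real.sqrt_nonneg ((2/Real.pi^2) * Kc (4+3*α) qc)
    have := Real.rpow_nonneg hd.le (3*α/8)
    positivity
  have h := outer_le (a := 0) (b := s) hs hq0 hq1 hc0n
    (fun r => ∫ z in (0:ℝ)..Real.pi, |DGF (t-r) x z - DGF (s-r) x z|)
    (fun r => intervalIntegral.integral_nonneg Real.pi_pos.le (fun z _ => abs_nonneg _))
    ?_
  · refine h.trans ?_
    rw [sub_zero]
    have hsT : s ^ (1-q) ≤ T ^ (1-q) := Real.rpow_le_rpow hs (by linarith) (by linarith)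
    calc c0 * (s^(1-q)/(1-q)) ≤ c0 * (T^(1-q)/(1-q)) := by gcongr
      _ = _ := by rw [hc0]; ring
  · intro r hr
    have hu : 0 < s - r := by linarith [hr.2]
    have htr : t - r = (s - r) + (t - s) := by ring
    show (∫ z in (0:ℝ)..Real.pi, |DGF (t-r) x z - DGF (s-r) x z|) ≤ c0 * (s-r)^(-q)
    rw [htr]
    calc (∫ z in (0:ℝ)..Real.pi, |DGF ((s-r)+(t-s)) x z - DGF (s-r) x z|)
        ≤ Real.pi * (Real.sqrt ((2/Real.pi^2) * Kc (4+3*α) qc)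
            * (t-s)^(3*α/8) * (s-r)^(-(qc/2))) := innerC hu hd hα hα1
      _ = c0 * (s-r)^(-q) := by rw [hc0, hq]; ring

lemma termD {α T : ℝ} (hα : 0 < α) (hα1 : α < 1) (hT : 0 < T) :
    ∃ C : ℝ, 0 ≤ C ∧ ∀ x s t : ℝ, 0 ≤ s → s < t → t ≤ T →
      ∫ r in s..t, ∫ z in (0:ℝ)..Real.pi, |DGF (t-r) x z|
        ≤ C * (t-s)^(3*α/8) := by
  set qd : ℝ := 2-3*α/4 with hqd
  set q : ℝ := qd/2 with hq
  have hq0 : 0 < q := by rw [hq, hqd]; linarith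
  have hq1 : q < 1 := by rw [hq, hqd]; linarith
  have h1q : 0 < 1 - q := by linarith
  have hKpos : 0 < Kc 4 qd := Kc_pos (by rw [hqd]; linarith) (by rw [hqd]; linarith)
  refine ⟨Real.pi * Real.sqrt (((1:ℝ)/2) * Kc 4 qd) * (1/(1-q)), by positivity, ?_⟩
  intro x s t hs hst htT
  have hd : 0 < t - s := by linarith
  set c0 : ℝ := Real.pi * Real.sqrt (((1:ℝ)/2) * Kc 4 qd) with hc0
  have hc0n : 0 ≤ c0 := by
    rw [hc0]
    have := Real.sqrt_nonneg (((1:ℝ)/2) * Kc 4 qd)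
    positivity
  have h := outer_le (a := s) (b := t) hst.le hq0 hq1 hc0n
    (fun r => ∫ z in (0:ℝ)..Real.pi, |DGF (t-r) x z|)
    (fun r => intervalIntegral.integral_nonneg Real.pi_pos.le (fun z _ => abs_nonneg _))
    ?_
  · refine h.trans (le_of_eq ?_)
    rw [hc0, show 1 - q = 3*α/8 by rw [hq, hqd]; ring]
    ring
  · intro r hr
    have hu : 0 < t - r := by linarith [hr.2]
    show (∫ z in (0:ℝ)..Real.pi, |DGF (t-r) x z|) ≤ c0 * (t-r)^(-q)
    calc (∫ z in (0:ℝ)..Real.pi, |DGF (t-r) x z|)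
        ≤ Real.pi * (Real.sqrt (((1:ℝ)/2) * Kc 4 qd) * (t-r)^(-(qd/2))) := innerD hu hα hα1
      _ = c0 * (t-r)^(-q) := by rw [hc0, hq]; ring


end Stmt13Proof

open MeasureTheory in
/-- For every `α ∈ (0,1)` and `T > 0` there is `C = C(α,T) > 0` such that for all
`x ∈ (0,π)` and `0 ≤ s < t ≤ T`:
`∫₀ˢ∫₀^π |G_{t-r}(x,z) - G_{s-r}(x,z)|² dz dr + ∫ₛᵗ∫₀^π |G_{t-r}(x,z)|² dz dr ≤ C(t-s)^{3α/4}`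
and
`∫₀ˢ∫₀^π |ΔG_{t-r}(x,z) - ΔG_{s-r}(x,z)| dz dr + ∫ₛᵗ∫₀^π |ΔG_{t-r}(x,z)| dz dr ≤ C(t-s)^{3α/8}`. -/
theorem stmt13 (α T : ℝ) (hα : α ∈ Set.Ioo (0 : ℝ) 1) (hT : 0 < T) :
    ∃ C : ℝ, 0 < C ∧ ∀ x ∈ Set.Ioo 0 Real.pi, ∀ s t : ℝ, 0 ≤ s → s < t → t ≤ T →
      ((∫ r in (0:ℝ)..s, ∫ z in (0:ℝ)..Real.pi, (GF (t - r) x z - GF (s - r) x z) ^ 2)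
          + (∫ r in s..t, ∫ z in (0:ℝ)..Real.pi, (GF (t - r) x z) ^ 2)
            ≤ C * (t - s) ^ (3 * α / 4))
      ∧ ((∫ r in (0:ℝ)..s, ∫ z in (0:ℝ)..Real.pi, |DGF (t - r) x z - DGF (s - r) x z|)
          + (∫ r in s..t, ∫ z in (0:ℝ)..Real.pi, |DGF (t - r) x z|)
            ≤ C * (t - s) ^ (3 * α / 8)) := by

  obtain ⟨hα0, hα1⟩ := hα
  obtain ⟨CA, hCA0, hCA⟩ := termA hα0 hα1 hT
  obtain ⟨CB, hCB0, hCB⟩ := termB hα0 hα1 hT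
  obtain ⟨CC, hCC0, hCC⟩ := termC hα0 hα1 hT
  obtain ⟨CD, hCD0, hCD⟩ := termD hα0 hα1 hT
  refine ⟨CA + CB + CC + CD + 1, by linarith, ?_⟩
  intro x _hx s t hs hst htT
  have hp1 : (0:ℝ) ≤ (t-s)^(3*α/4) := Real.rpow_nonneg (by linarith) _
  have hp2 : (0:ℝ) ≤ (t-s)^(3*α/8) := Real.rpow_nonneg (by linarith) _
  constructor
  · have h1 := hCA x s t hs hst htT
    have h2 := hCB x s t hs hst htT
    nlinarith
  · have h1 := hCC x s t hs hst htT
    have h2 := hCD x s t hs hst htT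
    nlinarith
end
end

section
/- For every T > 0 and every ε ∈ (0, 1/4) there exists a constant C = C(T,ε) > 0, independent of n, such that for all integers n ≥ 2, all t ∈ (0,T], and all x, y ∈ (0,π): |G^n_t(x,y)| ≤ C t^{-1/4 - ε}, and |Δ_nG^n_t(x,y)| ≤ C t^{-3/4 - ε}. -/
noncomputable section

open Real intervalIntegral

lemma phiF_abs_le (j : ℕ) (x : ℝ) : |phiF j x| ≤ Real.sqrt (2 / Real.pi) := by
  unfold phiF
  rw [abs_mul, abs_of_nonneg (Real.sqrt_nonneg _)]
  calc Real.sqrt (2 / Real.pi) * |Real.sin (j * x)|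
      ≤ Real.sqrt (2 / Real.pi) * 1 :=
        mul_le_mul_of_nonneg_left (Real.abs_sin_le_one _) (Real.sqrt_nonneg _)
    _ = _ := mul_one _

lemma phiIn_abs_le (n j : ℕ) (hn : 1 ≤ n) (x : ℝ) :
    |phiIn n j x| ≤ Real.sqrt (2 / Real.pi) := by
  have hπ := Real.pi_pos
  have hn0 : (0:ℝ) < n := by exact_mod_cast hn
  have hh : 0 < Real.pi / n := div_pos hπ hn0
  set θ : ℝ := (n : ℝ) / Real.pi * (x - kap n x) with hθ
  have hfl : ((⌊x / (Real.pi / n)⌋ : ℝ)) ≤ x / (Real.pi / n) := Int.floor_le _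
  have hfl2 : x / (Real.pi / n) < (⌊x / (Real.pi / n)⌋ : ℝ) + 1 := Int.lt_floor_add_one _
  have hk1 : kap n x ≤ x := by
    unfold kap
    calc (Real.pi / n) * (⌊x / (Real.pi / n)⌋ : ℝ) ≤ (Real.pi / n) * (x / (Real.pi / n)) :=
          mul_le_mul_of_nonneg_left hfl hh.le
      _ = x := by field_simp
  have hk2 : x ≤ kap n x + Real.pi / n := by
    unfold kap
    have := mul_le_mul_of_nonneg_left hfl2.le hh.le
    calc x = (Real.pi / n) * (x / (Real.pi / n)) := by field_simp
      _ ≤ (Real.pi / n) * ((⌊x / (Real.pi / n)⌋ : ℝ) + 1) := this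
      _ = (Real.pi / n) * (⌊x / (Real.pi / n)⌋ : ℝ) + Real.pi / n := by ring
  have h0 : 0 ≤ θ := by
    apply mul_nonneg (by positivity)
    linarith
  have h1 : θ ≤ 1 := by
    rw [hθ]
    rw [div_mul_eq_mul_div, div_le_one hπ]
    have : x - kap n x ≤ Real.pi / n := by linarith
    calc (n:ℝ) * (x - kap n x) ≤ (n:ℝ) * (Real.pi / n) := mul_le_mul_of_nonneg_left this hn0.le
      _ = Real.pi := by field_simp
  have heq : phiIn n j x = (1 - θ) * phiF j (kap n x) + θ * phiF j (kap n x + Real.pi / n) := by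
    unfold phiIn; rw [hθ]; ring
  rw [heq]
  calc |(1 - θ) * phiF j (kap n x) + θ * phiF j (kap n x + Real.pi / n)|
      ≤ |(1 - θ) * phiF j (kap n x)| + |θ * phiF j (kap n x + Real.pi / n)| := abs_add_le _ _
    _ = (1 - θ) * |phiF j (kap n x)| + θ * |phiF j (kap n x + Real.pi / n)| := by
        rw [abs_mul, abs_mul, abs_of_nonneg (by linarith), abs_of_nonneg h0]
    _ ≤ (1 - θ) * Real.sqrt (2 / Real.pi) + θ * Real.sqrt (2 / Real.pi) := by
        have ha := phiF_abs_le j (kap n x)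
        have hb := phiF_abs_le j (kap n x + Real.pi / n)
        have h1' : (0:ℝ) ≤ 1 - θ := by linarith
        gcongr
    _ = Real.sqrt (2 / Real.pi) := by ring

lemma lamEig_sq_ge (j n : ℕ) (hj1 : 1 ≤ j) (hjn : j ≤ n) (hn : 1 ≤ n) :
    16 / Real.pi ^ 4 * (j : ℝ) ^ 4 ≤ (lamEig j n) ^ 2 := by
  have hπ := Real.pi_pos
  have hn0 : (0:ℝ) < n := by exact_mod_cast hn
  have hj0 : (0:ℝ) ≤ j := by positivity
  have hjn' : (j:ℝ) ≤ n := by exact_mod_cast hjn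
  have hang0 : 0 ≤ (j:ℝ) * Real.pi / (2 * n) := by positivity
  have hang1 : (j:ℝ) * Real.pi / (2 * n) ≤ Real.pi / 2 := by
    rw [div_le_div_iff₀ (by positivity) (by norm_num)]
    nlinarith
  have hs : (j:ℝ) / n ≤ Real.sin ((j:ℝ) * Real.pi / (2 * n)) := by
    have := Real.mul_le_sin hang0 hang1
    calc (j:ℝ)/n = 2 / Real.pi * ((j:ℝ) * Real.pi / (2 * n)) := by field_simp
      _ ≤ _ := this
  have hsz : (0:ℝ) ≤ (j:ℝ)/n := by positivity
  have h1 : ((j:ℝ)/n) ^ 2 ≤ Real.sin ((j:ℝ) * Real.pi / (2 * n)) ^ 2 := by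
    apply pow_le_pow_left₀ hsz hs
  have h2 : (((j:ℝ)/n) ^ 2) ^ 2 ≤ (Real.sin ((j:ℝ) * Real.pi / (2 * n)) ^ 2) ^ 2 :=
    pow_le_pow_left₀ (by positivity) h1 2
  have heq : (lamEig j n) ^ 2
      = (4 * (n : ℝ) ^ 2 / Real.pi ^ 2) ^ 2 * (Real.sin ((j:ℝ) * Real.pi / (2 * n)) ^ 2) ^ 2 := by
    unfold lamEig; ring
  have heq2 : 16 / Real.pi ^ 4 * (j : ℝ) ^ 4
      = (4 * (n : ℝ) ^ 2 / Real.pi ^ 2) ^ 2 * (((j:ℝ)/n) ^ 2) ^ 2 := by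
    field_simp; ring
  rw [heq, heq2]
  exact mul_le_mul_of_nonneg_left h2 (by positivity)

lemma geo_sum_le (m : ℕ) (r : ℝ) (hr : 0 < r) :
    ∑ j ∈ Finset.range m, Real.exp (-(((j:ℝ) + 1) * r)) ≤ 1 / r := by
  set q := Real.exp (-r) with hq
  have hq0 : 0 < q := Real.exp_pos _
  have hq1 : q < 1 := by rw [hq]; exact Real.exp_lt_one_iff.mpr (by linarith)
  have hterm : ∀ j : ℕ, Real.exp (-(((j:ℝ) + 1) * r)) = q * q ^ j := by
    intro j
    rw [hq, ← Real.exp_nat_mul, ← Real.exp_add]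
    congr 1
    push_cast; ring
  have hsum : ∑ j ∈ Finset.range m, Real.exp (-(((j:ℝ) + 1) * r))
      = q * ∑ j ∈ Finset.range m, q ^ j := by
    rw [Finset.mul_sum]; exact Finset.sum_congr rfl fun j _ => hterm j
  rw [hsum]
  have hle : ∑ j ∈ Finset.range m, q ^ j ≤ (1 - q)⁻¹ := by
    have := tsum_geometric_of_lt_one hq0.le hq1
    rw [← this]
    exact Summable.sum_le_tsum _ (fun i _ => pow_nonneg hq0.le i)
      (summable_geometric_of_lt_one hq0.le hq1)
  have h1q : 0 < 1 - q := by linarith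
  calc q * ∑ j ∈ Finset.range m, q ^ j ≤ q * (1 - q)⁻¹ :=
        mul_le_mul_of_nonneg_left hle hq0.le
    _ ≤ 1 / r := by
        rw [← div_eq_mul_inv, div_le_div_iff₀ h1q hr]
        have hkey : r + 1 ≤ Real.exp r := Real.add_one_le_exp r
        have hqe : q * Real.exp r = 1 := by rw [hq, ← Real.exp_add]; simp
        nlinarith

lemma quart_ge (s : ℝ) : s - 1 ≤ s ^ 4 := by
  nlinarith [sq_nonneg (s ^ 2 - 1), sq_nonneg (s - 1), sq_nonneg (s + 1), sq_nonneg s,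
    sq_nonneg (s ^ 2 - s)]

lemma key_sum (m : ℕ) (c t : ℝ) (hc : 0 < c) (ht : 0 < t) :
    ∑ j ∈ Finset.range m, Real.exp (-(c * ((j:ℝ) + 1) ^ 4 * t)) ≤
      Real.exp 1 * (c ^ (-(1/4 : ℝ)) * t ^ (-(1/4 : ℝ))) := by
  have hu : 0 < c * t := mul_pos hc ht
  set r := (c * t) ^ ((1:ℝ)/4) with hrdef
  have hr : 0 < r := Real.rpow_pos_of_pos hu _
  have hr4 : r ^ (4:ℕ) = c * t := by
    rw [hrdef, ← Real.rpow_natCast ((c*t) ^ ((1:ℝ)/4)) 4, ← Real.rpow_mul hu.le]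
    norm_num
  have hterm : ∀ j : ℕ, Real.exp (-(c * ((j:ℝ) + 1) ^ 4 * t))
      ≤ Real.exp 1 * Real.exp (-(((j:ℝ) + 1) * r)) := by
    intro j
    rw [← Real.exp_add]
    apply Real.exp_le_exp.mpr
    have hs := quart_ge (((j:ℝ) + 1) * r)
    have : (((j:ℝ) + 1) * r) ^ 4 = c * ((j:ℝ) + 1) ^ 4 * t := by
      rw [mul_pow, hr4]; ring
    linarith [this ▸ hs]
  calc ∑ j ∈ Finset.range m, Real.exp (-(c * ((j:ℝ) + 1) ^ 4 * t))
      ≤ ∑ j ∈ Finset.range m, Real.exp 1 * Real.exp (-(((j:ℝ) + 1) * r)) :=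
        Finset.sum_le_sum fun j _ => hterm j
    _ = Real.exp 1 * ∑ j ∈ Finset.range m, Real.exp (-(((j:ℝ) + 1) * r)) := by
        rw [Finset.mul_sum]
    _ ≤ Real.exp 1 * (1 / r) :=
        mul_le_mul_of_nonneg_left (geo_sum_le m r hr) (Real.exp_pos 1).le
    _ = Real.exp 1 * (c ^ (-(1/4 : ℝ)) * t ^ (-(1/4 : ℝ))) := by
        congr 1
        rw [one_div, hrdef, ← Real.rpow_neg hu.le, Real.mul_rpow hc.le ht.le]

lemma abs_mul_exp_le (a t : ℝ) (ht : 0 < t) (ha : 0 ≤ a) :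
    a * Real.exp (-(a ^ 2 * t) / 2) ≤ t ^ (-(1/2 : ℝ)) := by
  have hst : 0 < Real.sqrt t := Real.sqrt_pos.2 ht
  set s := a * Real.sqrt t with hs
  have hs2 : s ^ 2 = a ^ 2 * t := by rw [hs, mul_pow, Real.sq_sqrt ht.le]
  have hkey : s ≤ Real.exp (s ^ 2 / 2) := by
    nlinarith [Real.add_one_le_exp (s ^ 2 / 2), sq_nonneg (s - 1)]
  have hmul : s * Real.exp (-(s ^ 2 / 2)) ≤ 1 := by
    have := mul_le_mul_of_nonneg_right hkey (Real.exp_pos (-(s ^ 2 / 2))).le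
    rwa [← Real.exp_add, add_neg_cancel, Real.exp_zero] at this
  have hts : t ^ (-(1/2 : ℝ)) = (Real.sqrt t)⁻¹ := by
    rw [Real.rpow_neg ht.le, Real.sqrt_eq_rpow]
  have harg : -(a ^ 2 * t) / 2 = -(s ^ 2 / 2) := by rw [hs2]; ring
  have hfin : a * Real.exp (-(a ^ 2 * t) / 2) * Real.sqrt t ≤ 1 := by
    calc a * Real.exp (-(a ^ 2 * t) / 2) * Real.sqrt t
        = s * Real.exp (-(s ^ 2 / 2)) := by rw [harg, hs]; ring
      _ ≤ 1 := hmul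
  rw [hts, ← one_div]
  exact (le_div_iff₀ hst).2 hfin


/-- For every `T > 0` and `ε ∈ (0, 1/4)` there is `C = C(T,ε) > 0`, independent of `n`,
such that for all `n ≥ 2`, `t ∈ (0,T]` and `x, y ∈ (0,π)`:
`|G^n_t(x,y)| ≤ C t^{-1/4-ε}` and `|Δ_nG^n_t(x,y)| ≤ C t^{-3/4-ε}`. -/
theorem stmt18 (T ε : ℝ) (hT : 0 < T) (hε : ε ∈ Set.Ioo (0 : ℝ) (1 / 4)) :
    ∃ C : ℝ, 0 < C ∧ ∀ n : ℕ, 2 ≤ n → ∀ t ∈ Set.Ioc 0 T,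
      ∀ x ∈ Set.Ioo 0 Real.pi, ∀ y ∈ Set.Ioo 0 Real.pi,
        |Gn n t x y| ≤ C * t ^ (-(1 / 4 : ℝ) - ε)
        ∧ |DGn n t x y| ≤ C * t ^ (-(3 / 4 : ℝ) - ε) := by
  obtain ⟨hε0, hε4⟩ := hε
  have hπ := Real.pi_pos
  set c : ℝ := 16 / Real.pi ^ 4 with hcdef
  have hc : 0 < c := by positivity
  have hc2 : 0 < c / 2 := by positivity
  set C : ℝ := 2 / Real.pi * Real.exp 1 *
      (c ^ (-(1/4 : ℝ)) + (c / 2) ^ (-(1/4 : ℝ))) * T ^ ε with hCdef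
  have hC : 0 < C := by positivity
  refine ⟨C, hC, ?_⟩
  intro n hn t ht x hx y hy
  obtain ⟨ht0, htT⟩ := ht
  have hM : Real.sqrt (2 / Real.pi) * Real.sqrt (2 / Real.pi) = 2 / Real.pi :=
    Real.mul_self_sqrt (by positivity)
  -- eigenvalue lower bound, for j in the range
  have hlam : ∀ j ∈ Finset.range (n - 1),
      c * ((j:ℝ) + 1) ^ 4 ≤ (lamEig (j + 1) n) ^ 2 := by
    intro j hj
    have hj' := Finset.mem_range.1 hj
    have h := lamEig_sq_ge (j + 1) n (by omega) (by omega) (by omega)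
    push_cast at h
    rw [hcdef]
    exact h
  have hphi : ∀ j, |phiIn n (j + 1) x| * |phiF (j + 1) (kap n y)| ≤ 2 / Real.pi := by
    intro j
    calc |phiIn n (j + 1) x| * |phiF (j + 1) (kap n y)|
        ≤ Real.sqrt (2 / Real.pi) * Real.sqrt (2 / Real.pi) := by
          gcongr
          · exact phiIn_abs_le n (j + 1) (by omega) x
          · exact phiF_abs_le _ _
      _ = 2 / Real.pi := hM
  -- conversion of powers
  have hconv : ∀ a : ℝ, t ^ (-a) ≤ T ^ ε * t ^ (-a - ε) := by
    intro a
    have h1 : t ^ (-a) = t ^ ε * t ^ (-a - ε) := by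
      rw [← Real.rpow_add ht0]; congr 1; ring
    rw [h1]
    exact mul_le_mul_of_nonneg_right (Real.rpow_le_rpow ht0.le htT hε0.le)
      (Real.rpow_nonneg ht0.le _)
  constructor
  · -- bound for Gn
    have hG1 : |Gn n t x y| ≤
        2 / Real.pi * ∑ j ∈ Finset.range (n - 1), Real.exp (-(c * ((j:ℝ) + 1) ^ 4 * t)) := by
      calc |Gn n t x y| ≤ ∑ j ∈ Finset.range (n - 1),
            |Real.exp (-(lamEig (j + 1) n) ^ 2 * t) * phiIn n (j + 1) x
              * phiF (j + 1) (kap n y)| := Finset.abs_sum_le_sum_abs _ _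
        _ ≤ ∑ j ∈ Finset.range (n - 1),
            2 / Real.pi * Real.exp (-(c * ((j:ℝ) + 1) ^ 4 * t)) := by
          apply Finset.sum_le_sum
          intro j hj
          rw [abs_mul, abs_mul, Real.abs_exp]
          have e1 : Real.exp (-(lamEig (j + 1) n) ^ 2 * t)
              ≤ Real.exp (-(c * ((j:ℝ) + 1) ^ 4 * t)) := by
            apply Real.exp_le_exp.mpr
            have := hlam j hj
            nlinarith
          calc Real.exp (-(lamEig (j + 1) n) ^ 2 * t) * |phiIn n (j + 1) x|
                * |phiF (j + 1) (kap n y)|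
              = Real.exp (-(lamEig (j + 1) n) ^ 2 * t)
                * (|phiIn n (j + 1) x| * |phiF (j + 1) (kap n y)|) := by ring
            _ ≤ Real.exp (-(c * ((j:ℝ) + 1) ^ 4 * t)) * (2 / Real.pi) := by
                apply mul_le_mul e1 (hphi j) (by positivity) (Real.exp_pos _).le
            _ = 2 / Real.pi * Real.exp (-(c * ((j:ℝ) + 1) ^ 4 * t)) := by ring
        _ = 2 / Real.pi * ∑ j ∈ Finset.range (n - 1),
            Real.exp (-(c * ((j:ℝ) + 1) ^ 4 * t)) := (Finset.mul_sum _ _ _).symm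
    have hG2 : |Gn n t x y| ≤
        2 / Real.pi * (Real.exp 1 * (c ^ (-(1/4 : ℝ)) * t ^ (-(1/4 : ℝ)))) :=
      hG1.trans (mul_le_mul_of_nonneg_left (key_sum _ c t hc ht0) (by positivity))
    have hcoef : 2 / Real.pi * Real.exp 1 * c ^ (-(1/4 : ℝ)) * T ^ ε ≤ C := by
      have hCeq : C = 2 / Real.pi * Real.exp 1 * c ^ (-(1/4 : ℝ)) * T ^ ε
          + 2 / Real.pi * Real.exp 1 * (c / 2) ^ (-(1/4 : ℝ)) * T ^ ε := by
        rw [hCdef]; ring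
      have hpos : 0 ≤ 2 / Real.pi * Real.exp 1 * (c / 2) ^ (-(1/4 : ℝ)) * T ^ ε := by positivity
      linarith
    calc |Gn n t x y|
        ≤ 2 / Real.pi * (Real.exp 1 * (c ^ (-(1/4 : ℝ)) * t ^ (-(1/4 : ℝ)))) := hG2
      _ = (2 / Real.pi * Real.exp 1 * c ^ (-(1/4 : ℝ))) * t ^ (-(1/4 : ℝ)) := by ring
      _ ≤ (2 / Real.pi * Real.exp 1 * c ^ (-(1/4 : ℝ)))
            * (T ^ ε * t ^ (-(1/4 : ℝ) - ε)) := by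
          exact mul_le_mul_of_nonneg_left (hconv (1/4)) (by positivity)
      _ = (2 / Real.pi * Real.exp 1 * c ^ (-(1/4 : ℝ)) * T ^ ε) * t ^ (-(1/4 : ℝ) - ε) := by
          ring
      _ ≤ C * t ^ (-(1 / 4 : ℝ) - ε) :=
          mul_le_mul_of_nonneg_right hcoef (Real.rpow_nonneg ht0.le _)
  · -- bound for DGn
    have hD1 : |DGn n t x y| ≤
        2 / Real.pi * (t ^ (-(1/2 : ℝ)) *
          ∑ j ∈ Finset.range (n - 1), Real.exp (-(c / 2 * ((j:ℝ) + 1) ^ 4 * t))) := by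
      calc |DGn n t x y| ≤ ∑ j ∈ Finset.range (n - 1),
            |lamEig (j + 1) n * Real.exp (-(lamEig (j + 1) n) ^ 2 * t)
              * phiIn n (j + 1) x * phiF (j + 1) (kap n y)| := Finset.abs_sum_le_sum_abs _ _
        _ ≤ ∑ j ∈ Finset.range (n - 1),
            2 / Real.pi * (t ^ (-(1/2 : ℝ)) * Real.exp (-(c / 2 * ((j:ℝ) + 1) ^ 4 * t))) := by
          apply Finset.sum_le_sum
          intro j hj
          rw [abs_mul, abs_mul, abs_mul, Real.abs_exp]
          set lam := lamEig (j + 1) n with hlamdef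
          have hsplit : Real.exp (-lam ^ 2 * t)
              = Real.exp (-(lam ^ 2 * t) / 2) * Real.exp (-(lam ^ 2 * t) / 2) := by
            rw [← Real.exp_add]; congr 1; ring
          have hA : |lam| * Real.exp (-(lam ^ 2 * t) / 2) ≤ t ^ (-(1/2 : ℝ)) := by
            have := abs_mul_exp_le |lam| t ht0 (abs_nonneg _)
            rwa [sq_abs] at this
          have hB : Real.exp (-(lam ^ 2 * t) / 2)
              ≤ Real.exp (-(c / 2 * ((j:ℝ) + 1) ^ 4 * t)) := by
            apply Real.exp_le_exp.mpr
            have := hlam j hj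
            nlinarith
          calc |lam| * Real.exp (-lam ^ 2 * t) * |phiIn n (j + 1) x|
                * |phiF (j + 1) (kap n y)|
              = (|lam| * Real.exp (-(lam ^ 2 * t) / 2)) * Real.exp (-(lam ^ 2 * t) / 2)
                * (|phiIn n (j + 1) x| * |phiF (j + 1) (kap n y)|) := by
                rw [hsplit]; ring
            _ ≤ t ^ (-(1/2 : ℝ)) * Real.exp (-(c / 2 * ((j:ℝ) + 1) ^ 4 * t)) * (2 / Real.pi) := by
                apply mul_le_mul _ (hphi j) (by positivity) (by positivity)
                exact mul_le_mul hA hB (Real.exp_pos _).le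
                  (Real.rpow_nonneg ht0.le _)
            _ = 2 / Real.pi * (t ^ (-(1/2 : ℝ))
                * Real.exp (-(c / 2 * ((j:ℝ) + 1) ^ 4 * t))) := by ring
        _ = 2 / Real.pi * (t ^ (-(1/2 : ℝ)) *
            ∑ j ∈ Finset.range (n - 1), Real.exp (-(c / 2 * ((j:ℝ) + 1) ^ 4 * t))) := by
          rw [Finset.mul_sum, Finset.mul_sum]
    have hD2 : |DGn n t x y| ≤
        2 / Real.pi * (t ^ (-(1/2 : ℝ)) *
          (Real.exp 1 * ((c / 2) ^ (-(1/4 : ℝ)) * t ^ (-(1/4 : ℝ))))) := by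
      refine hD1.trans ?_
      apply mul_le_mul_of_nonneg_left _ (by positivity)
      exact mul_le_mul_of_nonneg_left (key_sum _ (c / 2) t hc2 ht0)
        (Real.rpow_nonneg ht0.le _)
    have hpow : t ^ (-(1/2 : ℝ)) * t ^ (-(1/4 : ℝ)) = t ^ (-(3/4 : ℝ)) := by
      rw [← Real.rpow_add ht0]; norm_num
    have hcoef : 2 / Real.pi * Real.exp 1 * (c / 2) ^ (-(1/4 : ℝ)) * T ^ ε ≤ C := by
      have hCeq : C = 2 / Real.pi * Real.exp 1 * c ^ (-(1/4 : ℝ)) * T ^ ε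
          + 2 / Real.pi * Real.exp 1 * (c / 2) ^ (-(1/4 : ℝ)) * T ^ ε := by
        rw [hCdef]; ring
      have hpos : 0 ≤ 2 / Real.pi * Real.exp 1 * c ^ (-(1/4 : ℝ)) * T ^ ε := by positivity
      linarith
    calc |DGn n t x y|
        ≤ 2 / Real.pi * (t ^ (-(1/2 : ℝ)) *
            (Real.exp 1 * ((c / 2) ^ (-(1/4 : ℝ)) * t ^ (-(1/4 : ℝ))))) := hD2
      _ = (2 / Real.pi * Real.exp 1 * (c / 2) ^ (-(1/4 : ℝ)))
            * (t ^ (-(1/2 : ℝ)) * t ^ (-(1/4 : ℝ))) := by ring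
      _ = (2 / Real.pi * Real.exp 1 * (c / 2) ^ (-(1/4 : ℝ))) * t ^ (-(3/4 : ℝ)) := by
          rw [hpow]
      _ ≤ (2 / Real.pi * Real.exp 1 * (c / 2) ^ (-(1/4 : ℝ)))
            * (T ^ ε * t ^ (-(3/4 : ℝ) - ε)) :=
          mul_le_mul_of_nonneg_left (hconv (3/4)) (by positivity)
      _ = (2 / Real.pi * Real.exp 1 * (c / 2) ^ (-(1/4 : ℝ)) * T ^ ε)
            * t ^ (-(3/4 : ℝ) - ε) := by ring
      _ ≤ C * t ^ (-(3 / 4 : ℝ) - ε) :=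
          mul_le_mul_of_nonneg_right hcoef (Real.rpow_nonneg ht0.le _)
end
end
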